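/- arXiv:1907.02738 — 3 statements merged into one kernel-verified Lean document; each statement's English description precedes it below -/
import Mathlib

section
/- Let E = (E,+,',0,1) be a monotonous effect algebra with induced order ≤, and define x⊙y := (x'+y')' (defined iff x' ≤ y). For all a,b,c ∈ E: if LU(a,b') ≤ U(b' + L(b,c)), then L(U(a,b')⊙b) ≤ UL(b,c). -/
namespace Paper

variable {E : Type*}

/-- The lower cone `L(S)` of a subset w.r.t. an order relation. -/
def lcone (le : E → E → Prop) (S : Set E) : Set E := {x | ∀ y ∈ S, le x y}

/-- The upper cone `U(S)` of a subset w.r.t. an order relation. -/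
def ucone (le : E → E → Prop) (S : Set E) : Set E := {x | ∀ y ∈ S, le y x}

/-- `S ≤ T` for subsets: every element of `S` is below every element of `T`. -/
def setLE (le : E → E → Prop) (S T : Set E) : Prop := ∀ x ∈ S, ∀ y ∈ T, le x y

/-- Effect algebra axioms (E1)-(E4); the partial operation `+` is encoded via `Option`
(`add x y = some z` means `x + y` is defined with value `z`). -/
structure IsEffectAlgebra (add : E → E → Option E) (compl : E → E)
    (zero one : E) : Prop where
  /-- (E1) -/
  comm : ∀ x y, add x y = add y x
  /-- (E2) -/
  assoc : ∀ x y z, (add x y).bind (fun u => add u z) = (add y z).bind (fun v => add x v)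
  /-- (E3): `x'` is the unique `u` with `x + u = 1`. -/
  compl_iff : ∀ x u, add x u = some one ↔ u = compl x
  /-- (E4) -/
  one_add : ∀ x y, add one x = some y → x = zero

/-- The induced order: `x ≤ y` iff there is `z` with `x + z = y`. -/
def eaLe (add : E → E → Option E) (x y : E) : Prop := ∃ z, add x z = some y

/-- `x + A := {x + a : a ∈ A}`. -/
def addLSet (add : E → E → Option E) (x : E) (S : Set E) : Set E :=
  {z | ∃ a ∈ S, add x a = some z}

/-- `A + x := {a + x : a ∈ A}`. -/
def addRSet (add : E → E → Option E) (S : Set E) (x : E) : Set E :=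
  {z | ∃ a ∈ S, add a x = some z}

/-- A monotonous effect algebra: for every `x` and nonempty `A`, `B`, if `A ∪ B ≤ x'`
and `L(A) ≤ U(B)`, then `L(x + A) ≤ U(x + B)`. -/
def Monotonous (add : E → E → Option E) (compl : E → E) : Prop :=
  ∀ (x : E) (A B : Set E), A.Nonempty → B.Nonempty →
    (∀ a ∈ A ∪ B, eaLe add a (compl x)) →
    setLE (eaLe add) (lcone (eaLe add) A) (ucone (eaLe add) B) →
    setLE (eaLe add) (lcone (eaLe add) (addLSet add x A)) (ucone (eaLe add) (addLSet add x B))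

/-- The multiplication `x ⊙ y := (x' + y')'` derived from an effect algebra
(defined iff `x' + y'` is, i.e. iff `x' ≤ y`). -/
def eaOdot (add : E → E → Option E) (compl : E → E) (x y : E) : Option E :=
  (add (compl x) (compl y)).map compl

/-- The implication `x → y := x' + L(x,y)` derived from an effect algebra. -/
def eaImp (add : E → E → Option E) (compl : E → E) (x y : E) : Set E :=
  addLSet add (compl x) (lcone (eaLe add) {x, y})

/-- `S ⊙ y := {s ⊙ y : s ∈ S}`. -/
def odotLSet (odot : E → E → Option E) (S : Set E) (y : E) : Set E :=
  {w | ∃ s ∈ S, odot s y = some w}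

/-- `y ⊙ S := {y ⊙ s : s ∈ S}`. -/
def odotRSet (odot : E → E → Option E) (y : E) (S : Set E) : Set E :=
  {w | ∃ s ∈ S, odot y s = some w}

/-- Commutative unsharp residuated poset, axioms (C1)-(C4); `⊙` is a partial
operation encoded via `Option` and `→` maps pairs to subsets. -/
structure IsCURP (le : E → E → Prop) (odot : E → E → Option E) (imp : E → E → Set E)
    (compl : E → E) (zero one : E) : Prop where
  /-- (C1): bounded poset … -/
  le_refl : ∀ x, le x x
  le_antisymm : ∀ x y, le x y → le y x → x = y
  le_trans : ∀ x y z, le x y → le y z → le x z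
  zero_le : ∀ x, le zero x
  le_one : ∀ x, le x one
  /-- (C1): … with an antitone involution. -/
  compl_compl : ∀ x, compl (compl x) = x
  compl_antitone : ∀ x y, le x y → le (compl y) (compl x)
  /-- (C2): `x ⊙ y` is defined iff `x' ≤ y`. -/
  odot_defined : ∀ x y, (odot x y).isSome ↔ le (compl x) y
  /-- (C2): partial commutative monoid. -/
  odot_comm : ∀ x y, odot x y = odot y x
  odot_assoc : ∀ x y z, (odot x y).bind (fun u => odot u z) = (odot y z).bind (fun v => odot x v)
  odot_one : ∀ x, odot x one = some x
  one_odot : ∀ x, odot one x = some x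
  /-- (C2): `z' ≤ x ≤ y` implies `x ⊙ z ≤ y ⊙ z`. -/
  odot_mono : ∀ x y z a b, le (compl z) x → le x y →
    odot x z = some a → odot y z = some b → le a b
  /-- (C3): unsharp adjointness. -/
  adjoint : ∀ x y z,
    setLE le (lcone le (odotLSet odot (ucone le {x, compl y}) y))
      (ucone le (lcone le {y, z})) ↔
    setLE le (lcone le (ucone le {x, compl y})) (ucone le (imp y z))
  /-- (C4) -/
  imp_zero : ∀ x, imp x zero = {compl x}

/-- Divisibility: `x ≤ y` implies `y ⊙ (y → x) = L(x)`. -/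
def CURPDivisible (le : E → E → Prop) (odot : E → E → Option E)
    (imp : E → E → Set E) : Prop :=
  ∀ x y, le x y → odotRSet odot y (imp y x) = lcone le {x}

/-- Pseudoeffect algebra axioms (P1)-(P4); `x̄ = lc x`, `x̃ = rc x`. -/
structure IsPEA (add : E → E → Option E) (lc rc : E → E) (zero one : E) : Prop where
  /-- (P1): if `x + y` is defined then `u + x = x + y` for some `u` … -/
  exists_left : ∀ x y z, add x y = some z → ∃ u, add u x = some z
  /-- (P1): … and `y + w = x + y` for some `w`. -/
  exists_right : ∀ x y z, add x y = some z → ∃ w, add y w = some z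
  /-- (P2) -/
  assoc : ∀ x y z, (add x y).bind (fun u => add u z) = (add y z).bind (fun v => add x v)
  /-- (P3): `x̄` is the unique `u` with `u + x = 1`. -/
  lc_iff : ∀ x u, add u x = some one ↔ u = lc x
  /-- (P3): `x̃` is the unique `w` with `x + w = 1`. -/
  rc_iff : ∀ x w, add x w = some one ↔ w = rc x
  /-- (P4) -/
  one_add : ∀ x y, add one x = some y → x = zero
  add_one : ∀ x y, add x one = some y → x = zero

/-- A pseudoeffect algebra is good if `(x̄ + ȳ)˜ = (x̃ + ỹ)‾` whenever `x̃ ≤ y`. -/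
def Good (add : E → E → Option E) (lc rc : E → E) : Prop :=
  ∀ x y, eaLe add (rc x) y →
    (add (lc x) (lc y)).map rc = (add (rc x) (rc y)).map lc

/-- A monotonous pseudoeffect algebra. -/
def PEAMonotonous (add : E → E → Option E) (lc rc : E → E) : Prop :=
  (∀ (x : E) (A B : Set E), A.Nonempty → B.Nonempty →
    (∀ a ∈ A ∪ B, eaLe add a (lc x)) →
    setLE (eaLe add) (lcone (eaLe add) A) (ucone (eaLe add) B) →
    setLE (eaLe add) (lcone (eaLe add) (addRSet add A x))
      (ucone (eaLe add) (addRSet add B x))) ∧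
  (∀ (x : E) (A B : Set E), A.Nonempty → B.Nonempty →
    (∀ a ∈ A ∪ B, eaLe add a (rc x)) →
    setLE (eaLe add) (lcone (eaLe add) A) (ucone (eaLe add) B) →
    setLE (eaLe add) (lcone (eaLe add) (addLSet add x A))
      (ucone (eaLe add) (addLSet add x B)))

/-- The multiplication `x ⊙ y := (x̄ + ȳ)˜` derived from a pseudoeffect algebra. -/
def peaOdot (add : E → E → Option E) (lc rc : E → E) (x y : E) : Option E :=
  (add (lc x) (lc y)).map rc

/-- The implication `x → y := x̄ + L(x,y)` derived from a pseudoeffect algebra. -/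
def peaImp (add : E → E → Option E) (lc : E → E) (x y : E) : Set E :=
  {z | ∃ c ∈ lcone (eaLe add) {x, y}, add (lc x) c = some z}

/-- The implication `x ⇝ y := L(x,y) + x̃` derived from a pseudoeffect algebra. -/
def peaImpW (add : E → E → Option E) (rc : E → E) (x y : E) : Set E :=
  {z | ∃ c ∈ lcone (eaLe add) {x, y}, add c (rc x) = some z}

/-- Unsharp residuated poset, axioms (R1)-(R7); `x̄ = lc x`, `x̃ = rc x`. -/
structure IsURP (le : E → E → Prop) (odot : E → E → Option E)
    (imp impW : E → E → Set E) (lc rc : E → E) (zero one : E) : Prop where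
  /-- (R1): bounded poset. -/
  le_refl : ∀ x, le x x
  le_antisymm : ∀ x y, le x y → le y x → x = y
  le_trans : ∀ x y z, le x y → le y z → le x z
  zero_le : ∀ x, le zero x
  le_one : ∀ x, le x one
  /-- (R2) -/
  rc_lc : ∀ x, rc (lc x) = x
  lc_rc : ∀ x, lc (rc x) = x
  lc_antitone : ∀ x y, le x y → le (lc y) (lc x)
  rc_antitone : ∀ x y, le x y → le (rc y) (rc x)
  /-- (R3): `x ⊙ y` is defined iff `x̃ ≤ y`. -/
  odot_defined : ∀ x y, (odot x y).isSome ↔ le (rc x) y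
  /-- (R3): partial monoid. -/
  odot_assoc : ∀ x y z, (odot x y).bind (fun u => odot u z) = (odot y z).bind (fun v => odot x v)
  odot_one : ∀ x, odot x one = some x
  one_odot : ∀ x, odot one x = some x
  /-- (R3): `z̄ ≤ x ≤ y` implies `x ⊙ z ≤ y ⊙ z`. -/
  odot_rmono : ∀ x y z a b, le (lc z) x → le x y →
    odot x z = some a → odot y z = some b → le a b
  /-- (R3): `z̃ ≤ x ≤ y` implies `z ⊙ x ≤ z ⊙ y`. -/
  odot_lmono : ∀ x y z a b, le (rc z) x → le x y →
    odot z x = some a → odot z y = some b → le a b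
  /-- (R4) -/
  adjoint_r : ∀ x y z,
    setLE le (lcone le (odotLSet odot (ucone le {x, lc y}) y))
      (ucone le (lcone le {y, z})) ↔
    setLE le (lcone le (ucone le {x, lc y})) (ucone le (imp y z))
  /-- (R5) -/
  adjoint_l : ∀ x y z,
    setLE le (lcone le (odotRSet odot y (ucone le {x, rc y})))
      (ucone le (lcone le {y, z})) ↔
    setLE le (lcone le (ucone le {x, rc y})) (ucone le (impW y z))
  /-- (R6) -/
  imp_zero : ∀ x, imp x zero = {lc x}
  impW_zero : ∀ x, impW x zero = {rc x}
  /-- (R7) -/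
  compat : ∀ x y, (odot (lc x) (lc y)).map rc = (odot (rc x) (rc y)).map lc

section Aux

variable {add : E → E → Option E} {compl : E → E} {zero one : E}

theorem ea_assoc_ex (hEA : IsEffectAlgebra add compl zero one) {x y z u v : E}
    (h1 : add x y = some u) (h2 : add u z = some v) :
    ∃ w, add y z = some w ∧ add x w = some v := by
  have h := hEA.assoc x y z
  rw [h1, Option.bind_some, h2] at h
  cases e : add y z with
  | none => rw [e] at h; simp at h
  | some w =>
    rw [e, Option.bind_some] at h
    exact ⟨w, rfl, h.symm⟩

theorem ea_assoc_ex' (hEA : IsEffectAlgebra add compl zero one) {x y z u v : E}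
    (h1 : add y z = some u) (h2 : add x u = some v) :
    ∃ w, add x y = some w ∧ add w z = some v := by
  have h := hEA.assoc x y z
  rw [h1, Option.bind_some, h2] at h
  cases e : add x y with
  | none => rw [e] at h; simp at h
  | some w =>
    rw [e, Option.bind_some] at h
    exact ⟨w, rfl, h⟩

theorem ea_add_compl (hEA : IsEffectAlgebra add compl zero one) (x : E) :
    add x (compl x) = some one :=
  (hEA.compl_iff x (compl x)).mpr rfl

theorem ea_compl_add (hEA : IsEffectAlgebra add compl zero one) (x : E) :
    add (compl x) x = some one := by
  rw [hEA.comm]; exact ea_add_compl hEA x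

theorem ea_compl_compl (hEA : IsEffectAlgebra add compl zero one) (x : E) :
    compl (compl x) = x :=
  ((hEA.compl_iff (compl x) x).mp (ea_compl_add hEA x)).symm

theorem ea_compl_one (hEA : IsEffectAlgebra add compl zero one) :
    compl one = zero :=
  hEA.one_add (compl one) one (ea_add_compl hEA one)

theorem ea_one_add_zero (hEA : IsEffectAlgebra add compl zero one) :
    add one zero = some one := by
  rw [← ea_compl_one hEA]; exact ea_add_compl hEA one

theorem ea_add_zero (hEA : IsEffectAlgebra add compl zero one) (x : E) :
    add x zero = some x := by
  obtain ⟨w, hw, hw2⟩ :=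
    ea_assoc_ex hEA (ea_add_compl hEA (compl x)) (ea_one_add_zero hEA)
  rw [(hEA.compl_iff _ _).mp hw2, ea_compl_compl hEA] at hw
  exact hw

theorem ea_le_refl (hEA : IsEffectAlgebra add compl zero one) (x : E) :
    eaLe add x x := ⟨zero, ea_add_zero hEA x⟩

theorem ea_le_one (hEA : IsEffectAlgebra add compl zero one) (x : E) :
    eaLe add x one := ⟨compl x, ea_add_compl hEA x⟩

theorem ea_antitone (hEA : IsEffectAlgebra add compl zero one) {x y : E}
    (hxy : eaLe add x y) : eaLe add (compl y) (compl x) := by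
  obtain ⟨u, hu⟩ := hxy
  obtain ⟨w, hw, hw2⟩ := ea_assoc_ex hEA hu (ea_add_compl hEA y)
  rw [(hEA.compl_iff x w).mp hw2] at hw
  exact ⟨u, by rw [hEA.comm]; exact hw⟩

theorem ea_le_of_add (hEA : IsEffectAlgebra add compl zero one) {x y z : E}
    (h : add x y = some z) : eaLe add y (compl x) := by
  obtain ⟨w, hw, hw2⟩ := ea_assoc_ex hEA h (ea_add_compl hEA z)
  rw [(hEA.compl_iff x w).mp hw2] at hw
  exact ⟨compl z, hw⟩

end Aux

/-- The other direction of unsharp adjointness in a monotonous effect algebra: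
`LU(a,b') ≤ U(b' + L(b,c))` implies `L(U(a,b') ⊙ b) ≤ UL(b,c)`. -/
theorem stmt2 (add : E → E → Option E) (compl : E → E) (zero one : E)
    (hEA : IsEffectAlgebra add compl zero one)
    (hMon : Monotonous add compl) :
    ∀ a b c : E,
      setLE (eaLe add)
        (lcone (eaLe add) (ucone (eaLe add) {a, compl b}))
        (ucone (eaLe add) (addLSet add (compl b) (lcone (eaLe add) {b, c}))) →
      setLE (eaLe add)
        (lcone (eaLe add) (odotLSet (eaOdot add compl) (ucone (eaLe add) {a, compl b}) b))
        (ucone (eaLe add) (lcone (eaLe add) {b, c})) := by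
  intro a b c H p hp q hq
  have cc := ea_compl_compl hEA
  -- The two sets fed to monotonicity
  -- A = {r | b' + r is defined and c' <= b' + r},  B = (U(a,b'))'
  have hbA : b ∈ {r | ∃ m, add (compl b) r = some m ∧ eaLe add (compl c) m} :=
    ⟨one, ea_compl_add hEA b, ea_le_one hEA (compl c)⟩
  have hone : one ∈ ucone (eaLe add) ({a, compl b} : Set E) := by
    intro y _; exact ea_le_one hEA y
  have hzB : zero ∈ {t | ∃ s ∈ ucone (eaLe add) ({a, compl b} : Set E), compl s = t} :=
    ⟨one, hone, ea_compl_one hEA⟩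
  have hbound : ∀ x ∈ ({r | ∃ m, add (compl b) r = some m ∧ eaLe add (compl c) m} ∪
      {t | ∃ s ∈ ucone (eaLe add) ({a, compl b} : Set E), compl s = t} : Set E),
      eaLe add x (compl (compl b)) := by
    intro x hx
    rcases hx with hx | hx
    · obtain ⟨m, hm, -⟩ := hx
      exact ea_le_of_add hEA hm
    · obtain ⟨s, hs, rfl⟩ := hx
      exact ea_antitone hEA (hs (compl b) (by simp))
  have hlu : setLE (eaLe add)
      (lcone (eaLe add) {r | ∃ m, add (compl b) r = some m ∧ eaLe add (compl c) m})
      (ucone (eaLe add) {t | ∃ s ∈ ucone (eaLe add) ({a, compl b} : Set E), compl s = t}) := by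
    intro t ht u hu
    have hcu : compl u ∈ lcone (eaLe add) (ucone (eaLe add) ({a, compl b} : Set E)) := by
      intro s hs
      have h1 : eaLe add (compl s) u := hu (compl s) ⟨s, hs, rfl⟩
      have h2 := ea_antitone hEA h1
      rwa [cc] at h2
    have hct : compl t ∈ ucone (eaLe add)
        (addLSet add (compl b) (lcone (eaLe add) ({b, c} : Set E))) := by
      intro z hz
      obtain ⟨r0, hr0, hadd⟩ := hz
      obtain ⟨w, hw, hw2⟩ := ea_assoc_ex hEA hadd (ea_add_compl hEA z)
      rw [(hEA.compl_iff _ _).mp hw2, cc] at hw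
      obtain ⟨w2, hw2', hw22⟩ := ea_assoc_ex hEA hw (ea_add_compl hEA b)
      rw [(hEA.compl_iff _ _).mp hw22] at hw2'
      have hzA : compl z ∈ {r | ∃ m, add (compl b) r = some m ∧ eaLe add (compl c) m} :=
        ⟨compl r0, by rw [hEA.comm]; exact hw2',
          ea_antitone hEA (hr0 c (by simp))⟩
      have h3 := ea_antitone hEA (ht (compl z) hzA)
      rwa [cc] at h3
    have h4 := ea_antitone hEA (H (compl u) hcu (compl t) hct)
    rwa [cc, cc] at h4
  have key := hMon (compl b)
    {r | ∃ m, add (compl b) r = some m ∧ eaLe add (compl c) m}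
    {t | ∃ s ∈ ucone (eaLe add) ({a, compl b} : Set E), compl s = t}
    ⟨b, hbA⟩ ⟨zero, hzB⟩ hbound hlu
  have hq' : compl q ∈ lcone (eaLe add)
      (addLSet add (compl b) {r | ∃ m, add (compl b) r = some m ∧ eaLe add (compl c) m}) := by
    intro z hz
    obtain ⟨r, hrA, hadd⟩ := hz
    obtain ⟨m, hm, hcm⟩ := hrA
    rw [hm] at hadd
    obtain rfl := Option.some.inj hadd
    have hz1 : eaLe add (compl m) b := by
      have h5 := ea_antitone hEA (⟨r, hm⟩ : eaLe add (compl b) m)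
      rwa [cc] at h5
    have hz2 : eaLe add (compl m) c := by
      have h6 := ea_antitone hEA hcm
      rwa [cc] at h6
    have hzL : compl m ∈ lcone (eaLe add) ({b, c} : Set E) := by
      intro y hy
      simp only [Set.mem_insert_iff, Set.mem_singleton_iff] at hy
      rcases hy with rfl | rfl
      · exact hz1
      · exact hz2
    have h7 := ea_antitone hEA (hq (compl m) hzL)
    rwa [cc] at h7
  have hp' : compl p ∈ ucone (eaLe add)
      (addLSet add (compl b) {t | ∃ s ∈ ucone (eaLe add) ({a, compl b} : Set E), compl s = t}) := by
    intro z hz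
    obtain ⟨t, ⟨s, hs, rfl⟩, hadd⟩ := hz
    have hod : eaOdot add compl s b = some (compl z) := by
      unfold eaOdot
      rw [hEA.comm] at hadd
      rw [hadd]; rfl
    have hple : eaLe add p (compl z) := hp (compl z) ⟨s, hs, hod⟩
    have h8 := ea_antitone hEA hple
    rwa [cc] at h8
  have hfin := ea_antitone hEA (key (compl q) hq' (compl p) hp')
  rwa [cc, cc] at hfin

end Paper
end

section
/- Let E = (E,+,',0,1) be an effect algebra with induced order ≤. If a ≤ b in E, then {(b' + (b'+c)')' : c ∈ L(a)} = L(a). (That is, with x⊙y := (x'+y')' and b→a := b' + L(b,a), divisibility b⊙(b→a) = L(a) holds.) -/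
namespace Paper

variable {E : Type*}

/-! In an effect algebra `x + y = z` gives `z' + x = y'`; applied twice to `c + v = b`, it turns
`b' + c` into `v'` and then `b' + v` into `c'`, so `(b' + (b' + c)')' = c` for every `c ≤ b`.
Every `c ∈ L(a)` is below `b` once `a ≤ b`, so the map `c ↦ (b' + (b' + c)')'` is the
identity on `L(a)`. -/

theorem eaLe_trans {add : E → E → Option E}
    (assoc : ∀ x y z, (add x y).bind (fun u => add u z) = (add y z).bind (fun v => add x v))
    {x y z : E} (hxy : eaLe add x y) (hyz : eaLe add y z) : eaLe add x z := by
  obtain ⟨p, hp⟩ := hxy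
  obtain ⟨q, hq⟩ := hyz
  have h := assoc x p q
  rw [hp, Option.bind_some, hq] at h
  obtain ⟨r, -, hr⟩ := Option.bind_eq_some_iff.mp h.symm
  exact ⟨r, hr⟩

namespace IsEffectAlgebra

variable {add : E → E → Option E} {compl : E → E} {zero one : E}
  (hEA : IsEffectAlgebra add compl zero one)
include hEA

theorem compl_add_self (x : E) : add (compl x) x = some one := by
  rw [hEA.comm]
  exact (hEA.compl_iff x _).mpr rfl

theorem compl_add_eq_compl {x y z : E} (h : add x y = some z) :
    add (compl z) x = some (compl y) := by
  have hassoc := hEA.assoc (compl z) x y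
  rw [h, Option.bind_some, hEA.compl_add_self] at hassoc
  obtain ⟨u, hu, huy⟩ := Option.bind_eq_some_iff.mp hassoc
  rw [hu, (hEA.compl_iff y u).mp (by rwa [hEA.comm])]

theorem compl_compl (x : E) : compl (compl x) = x :=
  ((hEA.compl_iff (compl x) x).mp (hEA.compl_add_self x)).symm

theorem compl_add_compl_add_compl_eq {b c : E} (hcb : eaLe add c b) :
    ((add (compl b) c).bind (fun u => add (compl b) (compl u))).map compl = some c := by
  obtain ⟨v, hv⟩ := hcb
  have hvc : add v c = some b := by rwa [hEA.comm]
  rw [hEA.compl_add_eq_compl hv, Option.bind_some, hEA.compl_compl,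
    hEA.compl_add_eq_compl hvc, Option.map_some, hEA.compl_compl]

end IsEffectAlgebra

/-- Divisibility in an effect algebra: if `a ≤ b` then
`{(b' + (b' + c)')' : c ∈ L(a)} = L(a)`. -/
theorem stmt3 (add : E → E → Option E) (compl : E → E) (zero one : E)
    (hEA : IsEffectAlgebra add compl zero one) :
    ∀ a b : E, eaLe add a b →
      {z | ∃ c ∈ lcone (eaLe add) {a},
          ((add (compl b) c).bind (fun u => add (compl b) (compl u))).map compl = some z}
        = lcone (eaLe add) {a} := by
  intro a b hab
  have hfix : ∀ c ∈ lcone (eaLe add) {a},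
      ((add (compl b) c).bind (fun u => add (compl b) (compl u))).map compl = some c :=
    fun c hc => hEA.compl_add_compl_add_compl_eq (eaLe_trans hEA.assoc (hc a rfl) hab)
  ext z
  constructor
  · rintro ⟨c, hc, hz⟩
    rwa [← Option.some_injective _ ((hfix c hc).symm.trans hz)]
  · exact fun hz => ⟨z, hz, hfix z hz⟩

end Paper
end

section
/- Let C = (C,≤,⊙,→,',0,1) be a commutative unsharp residuated poset and define x + y := (x'⊙y')' (defined iff x ≤ y'), making (C,+,',0,1) an effect algebra. Then the induced order of this effect algebra (a ≤ₑ b iff there exists z with a+z = b) coincides with the order ≤ of C. -/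
namespace Paper

variable {E : Type*}

/-! Adjointness with `z = 0` together with (C4) shows that `y ⊙ y' = 0` and that `y'` is the only
`w` with `y ⊙ w = 0`. For `a ≤ b` put `d = a' ⊙ b`: associativity and this uniqueness give first
`b ⊙ d' = a` and then `d' ⊙ a' = b'`, that is `a + d = b`. Conversely, if `a + z = b` then
`b' = a' ⊙ z' ≤ a' ⊙ 1 = a'` by monotonicity of `⊙`. -/

namespace IsCURP

variable {le : E → E → Prop} {odot : E → E → Option E} {imp : E → E → Set E}
  {compl : E → E} {zero one : E}

theorem compl_le_of_odot_eq_some (h : IsCURP le odot imp compl zero one) {x y w : E}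
    (hw : odot x y = some w) : le (compl x) y :=
  (h.odot_defined x y).mp (by rw [hw]; rfl)

theorem exists_odot_eq_some (h : IsCURP le odot imp compl zero one) {x y : E}
    (hxy : le (compl x) y) : ∃ w, odot x y = some w :=
  Option.isSome_iff_exists.mp ((h.odot_defined x y).mpr hxy)

theorem compl_le_comm (h : IsCURP le odot imp compl zero one) {x y : E}
    (hxy : le (compl x) y) : le (compl y) x := by
  simpa only [h.compl_compl] using h.compl_antitone _ _ hxy

theorem odot_le_left (h : IsCURP le odot imp compl zero one) {x y w : E}
    (hw : odot x y = some w) : le w x := by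
  rw [h.odot_comm] at hw
  exact h.odot_mono y one x w x (h.compl_le_comm (h.compl_le_of_odot_eq_some hw)) (h.le_one y)
    hw (h.one_odot x)

theorem odot_compl_self (h : IsCURP le odot imp compl zero one) (y : E) :
    odot y (compl y) = some zero := by
  obtain ⟨v, hv⟩ := h.exists_odot_eq_some (h.le_refl (compl y))
  suffices le v zero by rw [hv, h.le_antisymm v zero this (h.zero_le v)]
  have hrhs : setLE le (lcone le (ucone le {y, compl (compl y)}))
      (ucone le (imp (compl y) zero)) := by
    intro t ht u hu
    rw [h.imp_zero, h.compl_compl] at hu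
    exact ht u (by simpa [ucone, h.compl_compl] using hu)
  have hv_lower : v ∈ lcone le (odotLSet odot (ucone le {y, compl (compl y)}) (compl y)) := by
    rintro w ⟨s, hs, hsw⟩
    exact h.odot_mono y s (compl y) v w (by rw [h.compl_compl]; exact h.le_refl y)
      (hs y (by simp)) hv hsw
  exact (h.adjoint y (compl y) zero).mpr hrhs v hv_lower zero fun t ht => ht zero (by simp)

theorem eq_compl_of_odot_eq_zero (h : IsCURP le odot imp compl zero one) {y w : E}
    (hw : odot y w = some zero) : w = compl y := by
  have hyw : le (compl y) w := h.compl_le_of_odot_eq_some hw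
  have hlhs : setLE le (lcone le (odotLSet odot (ucone le {w, compl y}) y))
      (ucone le (lcone le {y, zero})) := by
    intro t ht u hu
    have hzero_mem : zero ∈ odotLSet odot (ucone le {w, compl y}) y :=
      ⟨w, by simpa [ucone] using ⟨h.le_refl w, hyw⟩, by rw [h.odot_comm]; exact hw⟩
    exact h.le_trans t zero u (ht zero hzero_mem) (hu zero (by simp [lcone, h.zero_le]))
  have hw_lower : w ∈ lcone le (ucone le {w, compl y}) := fun u hu => hu w (by simp)
  have hcompl_upper : compl y ∈ ucone le (imp y zero) := by
    rw [h.imp_zero]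
    simpa [ucone] using h.le_refl (compl y)
  exact h.le_antisymm w (compl y)
    ((h.adjoint w y zero).mp hlhs w hw_lower (compl y) hcompl_upper) hyw

/-- `(x ⊙ y) ⊙ u' = u ⊙ u' = 0` with `u = x ⊙ y`, so `x ⊙ (y ⊙ u') = 0` and hence `y ⊙ u' = x'`. -/
theorem odot_compl_of_odot_eq_some (h : IsCURP le odot imp compl zero one) {x y u : E}
    (hu : odot x y = some u) : odot y (compl u) = some (compl x) := by
  have hassoc := h.odot_assoc x y (compl u)
  rw [hu, Option.bind_some, h.odot_compl_self u] at hassoc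
  obtain ⟨v, hv, hxv⟩ := Option.bind_eq_some_iff.mp hassoc.symm
  rw [hv, h.eq_compl_of_odot_eq_zero hxv]

theorem le_compl_of_odot_compl_eq_some (h : IsCURP le odot imp compl zero one) {a c w : E}
    (hw : odot (compl a) c = some w) : le a (compl w) := by
  simpa only [h.compl_compl] using h.compl_antitone _ _ (h.odot_le_left hw)

theorem exists_odot_compl_eq_compl_of_le (h : IsCURP le odot imp compl zero one) {a b : E}
    (hab : le a b) : ∃ d, odot (compl a) (compl d) = some (compl b) := by
  obtain ⟨d, hd⟩ := h.exists_odot_eq_some (by rwa [h.compl_compl])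
  have hbd : odot b (compl d) = some a := by
    simpa only [h.compl_compl] using h.odot_compl_of_odot_eq_some hd
  exact ⟨d, by rw [h.odot_comm]; exact h.odot_compl_of_odot_eq_some hbd⟩

end IsCURP

/-- The induced order of the effect algebra obtained from a commutative unsharp
residuated poset coincides with the original order. -/
theorem stmt11 (le : E → E → Prop) (odot : E → E → Option E) (imp : E → E → Set E)
    (compl : E → E) (zero one : E)
    (h : IsCURP le odot imp compl zero one) :
    ∀ a b : E, eaLe (fun x y => (odot (compl x) (compl y)).map compl) a b ↔ le a b := by
  intro a b
  constructor
  · rintro ⟨z, hz⟩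
    obtain ⟨w, hw, rfl⟩ := Option.map_eq_some_iff.mp hz
    exact h.le_compl_of_odot_compl_eq_some hw
  · intro hab
    obtain ⟨d, hd⟩ := h.exists_odot_compl_eq_compl_of_le hab
    exact ⟨d, show Option.map compl _ = _ by rw [hd, Option.map_some, h.compl_compl]⟩

end Paper
end
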